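/- arXiv:2403.01053 — 2 statements merged into one kernel-verified Lean document; each statement's English description precedes it below -/
import Mathlib

section
/- For any unit vector μ on the unit sphere S of E, the function κ ↦ log Z_μ(κ) is strictly convex on ℝ. (Z_μ is the moment generating function of the coordinate ⟪μ, z⟫ under σ, which is non-degenerate because d ≥ 2.) -/
open MeasureTheory Metric
open scoped RealInnerProductSpace Pointwise

/-- The canonical surface measure on the unit sphere of `EuclideanSpace ℝ (Fin d)`. -/
noncomputable def sphMeas (d : ℕ) :
    Measure (sphere (0 : EuclideanSpace ℝ (Fin d)) 1) :=
  (volume : Measure (EuclideanSpace ℝ (Fin d))).toSphere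

/-- The vMF normalizing integral `Z_μ(κ) = ∫_{z ∈ S} exp (κ ⟪μ, z⟫) dσ(z)`. -/
noncomputable def Zfun (d : ℕ) (μ : sphere (0 : EuclideanSpace ℝ (Fin d)) 1) (κ : ℝ) : ℝ :=
  ∫ z, Real.exp (κ * ⟪(μ : EuclideanSpace ℝ (Fin d)), (z : EuclideanSpace ℝ (Fin d))⟫)
    ∂(sphMeas d)

/-- The first-moment integral `Z_μ'(κ) = ∫_{z ∈ S} ⟪μ, z⟫ · exp (κ ⟪μ, z⟫) dσ(z)`. -/
noncomputable def Mfun (d : ℕ) (μ : sphere (0 : EuclideanSpace ℝ (Fin d)) 1) (κ : ℝ) : ℝ :=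
  ∫ z, ⟪(μ : EuclideanSpace ℝ (Fin d)), (z : EuclideanSpace ℝ (Fin d))⟫ *
      Real.exp (κ * ⟪(μ : EuclideanSpace ℝ (Fin d)), (z : EuclideanSpace ℝ (Fin d))⟫)
    ∂(sphMeas d)

section Aux

variable {d : ℕ} (μ : sphere (0 : EuclideanSpace ℝ (Fin d)) 1)

instance sphMeas_finite (d : ℕ) : IsFiniteMeasure (sphMeas d) :=
  inferInstanceAs (IsFiniteMeasure (volume : Measure (EuclideanSpace ℝ (Fin d))).toSphere)

/-- The coordinate function `z ↦ ⟪μ, z⟫` on the sphere. -/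
noncomputable def innF (μ z : sphere (0 : EuclideanSpace ℝ (Fin d)) 1) : ℝ :=
  ⟪(μ : EuclideanSpace ℝ (Fin d)), (z : EuclideanSpace ℝ (Fin d))⟫

lemma sph_norm (z : sphere (0 : EuclideanSpace ℝ (Fin d)) 1) :
    ‖(z : EuclideanSpace ℝ (Fin d))‖ = 1 :=
  mem_sphere_zero_iff_norm.mp z.2

lemma abs_innF_le (z : sphere (0 : EuclideanSpace ℝ (Fin d)) 1) : |innF μ z| ≤ 1 := by
  have h := abs_real_inner_le_norm (μ : EuclideanSpace ℝ (Fin d)) (z : EuclideanSpace ℝ (Fin d))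
  rwa [sph_norm, sph_norm, one_mul] at h

lemma continuous_innF : Continuous (innF μ) :=
  Continuous.inner continuous_const continuous_subtype_val

lemma memℒp_exp_innF (κ : ℝ) (p : ENNReal) :
    MemLp (fun z => Real.exp (κ * innF μ z)) p (sphMeas d) := by
  refine MemLp.of_bound
    ((Real.continuous_exp.comp (continuous_const.mul (continuous_innF μ))).aestronglyMeasurable)
    (Real.exp |κ|) (Filter.Eventually.of_forall fun z => ?_)
  rw [Real.norm_eq_abs, Real.abs_exp]
  apply Real.exp_le_exp.2
  calc κ * innF μ z ≤ |κ * innF μ z| := le_abs_self _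
    _ = |κ| * |innF μ z| := abs_mul _ _
    _ ≤ |κ| * 1 := by gcongr; exact abs_innF_le μ z
    _ = |κ| := mul_one _

lemma integrable_exp_innF (κ : ℝ) :
    Integrable (fun z => Real.exp (κ * innF μ z)) (sphMeas d) :=
  memLp_one_iff_integrable.1 (memℒp_exp_innF μ κ 1)

/-- Non-degeneracy: the coordinate `⟪μ, ·⟫` is not `σ`-a.e. equal to any constant. -/
lemma nondeg (hd : 2 ≤ d) (c : ℝ) : sphMeas d {z | innF μ z ≠ c} ≠ 0 := by
  set E := EuclideanSpace ℝ (Fin d)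
  set u : E := (μ : E) with hu_def
  have hu_norm : ‖u‖ = 1 := sph_norm μ
  have hu_ne : u ≠ 0 := by intro h; rw [h, norm_zero] at hu_norm; norm_num at hu_norm
  set s : Set (sphere (0 : E) 1) := {z | innF μ z ≠ c} with hs_def
  have hs_open : IsOpen s := isOpen_compl_singleton.preimage (continuous_innF μ)
  have hs_meas : MeasurableSet s := hs_open.measurableSet
  rw [sphMeas, Measure.toSphere_apply' _ hs_meas]
  set U : Set E := (ball (0 : E) 1 ∩ {(0 : E)}ᶜ) ∩ {x | ⟪u, x⟫ ≠ c * ‖x‖} with hU_def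
  have hU_open : IsOpen U := by
    apply IsOpen.inter (isOpen_ball.inter isOpen_compl_singleton)
    have hcont : Continuous fun x : E => ⟪u, x⟫ - c * ‖x‖ :=
      (Continuous.inner continuous_const continuous_id).sub (continuous_const.mul continuous_norm)
    have h2 : {x : E | ⟪u, x⟫ ≠ c * ‖x‖} = (fun x : E => ⟪u, x⟫ - c * ‖x‖) ⁻¹' {(0:ℝ)}ᶜ := by
      ext x; simp [sub_eq_zero]
    rw [h2]
    exact isOpen_compl_singleton.preimage hcont
  have hU_ne : U.Nonempty := by
    have horth : ∃ v : E, v ≠ 0 ∧ ⟪u, v⟫ = 0 := by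
      have hne_bot : (ℝ ∙ u)ᗮ ≠ ⊥ := by
        intro hbot
        have h1 : Module.finrank ℝ (ℝ ∙ u) = 1 := finrank_span_singleton hu_ne
        have h2 := Submodule.finrank_add_finrank_orthogonal (𝕜 := ℝ) (ℝ ∙ u)
        rw [hbot, h1, finrank_bot, finrank_euclideanSpace_fin] at h2
        omega
      obtain ⟨v, hv_mem, hv_ne⟩ := Submodule.exists_mem_ne_zero_of_ne_bot hne_bot
      exact ⟨v, hv_ne, (Submodule.mem_orthogonal _ _).1 hv_mem u
        (Submodule.mem_span_singleton_self u)⟩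
    obtain ⟨v, hv_ne, hv_orth⟩ := horth
    by_cases hc : c = 0
    · refine ⟨(1/2 : ℝ) • u, ⟨⟨?_, ?_⟩, ?_⟩⟩
      · rw [mem_ball_zero_iff, norm_smul, hu_norm]
        rw [Real.norm_eq_abs, abs_of_pos (by norm_num : (0:ℝ) < 1/2)]
        norm_num
      · simp only [Set.mem_compl_iff, Set.mem_singleton_iff]
        simp [smul_eq_zero, hu_ne]
      · simp only [Set.mem_setOf_eq, real_inner_smul_right, hc, zero_mul]
        rw [real_inner_self_eq_norm_sq, hu_norm]
        norm_num
    · have hnv : ‖v‖ ≠ 0 := norm_ne_zero_iff.2 hv_ne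
      have hxnorm : ‖((1/2 : ℝ) * ‖v‖⁻¹) • v‖ = 1/2 := by
        rw [norm_smul, Real.norm_eq_abs, abs_mul, abs_inv, abs_norm,
          abs_of_pos (by norm_num : (0:ℝ) < 1/2), mul_assoc, inv_mul_cancel₀ hnv, mul_one]
      refine ⟨((1/2 : ℝ) * ‖v‖⁻¹) • v, ⟨⟨?_, ?_⟩, ?_⟩⟩
      · rw [mem_ball_zero_iff, hxnorm]; norm_num
      · simp only [Set.mem_compl_iff, Set.mem_singleton_iff]
        simp [smul_eq_zero, hv_ne, hnv]
      · simp only [Set.mem_setOf_eq, real_inner_smul_right, hv_orth, mul_zero, hxnorm]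
        intro h
        apply hc
        have h' : c * (1/2 : ℝ) = 0 := h.symm
        rcases mul_eq_zero.1 h' with h'' | h''
        · exact h''
        · norm_num at h''
  have hsub : U ⊆ Set.Ioo (0:ℝ) 1 • (Subtype.val '' s) := by
    rintro x ⟨⟨hx1, hx0⟩, hx2⟩
    rw [mem_ball_zero_iff] at hx1
    have hx0' : x ≠ 0 := hx0
    have hnx : ‖x‖ ≠ 0 := norm_ne_zero_iff.2 hx0'
    have hnxpos : 0 < ‖x‖ := norm_pos_iff.2 hx0'
    have ha_norm : ‖(‖x‖⁻¹ • x : E)‖ = 1 := by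
      rw [norm_smul, Real.norm_eq_abs, abs_inv, abs_norm, inv_mul_cancel₀ hnx]
    refine Set.mem_smul.2 ⟨‖x‖, ⟨hnxpos, hx1⟩, (‖x‖⁻¹ • x : E), ?_, ?_⟩
    · refine ⟨⟨‖x‖⁻¹ • x, mem_sphere_zero_iff_norm.2 ha_norm⟩, ?_, rfl⟩
      simp only [hs_def, Set.mem_setOf_eq, innF]
      rw [real_inner_smul_right]
      intro h
      apply hx2
      have h' := congrArg (fun t => ‖x‖ * t) h
      rw [← mul_assoc, mul_inv_cancel₀ hnx, one_mul] at h'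
      rw [h']; ring
    · rw [smul_smul, mul_inv_cancel₀ hnx, one_smul]
  have hpos : 0 < volume (Set.Ioo (0:ℝ) 1 • (Subtype.val '' s)) :=
    lt_of_lt_of_le (hU_open.measure_pos volume hU_ne) (measure_mono hsub)
  apply mul_ne_zero
  · rw [finrank_euclideanSpace_fin]
    exact_mod_cast (Nat.cast_ne_zero (R := ENNReal)).2 (by omega)
  · exact hpos.ne'

include μ in
lemma sphMeas_ne_zero (hd : 2 ≤ d) : sphMeas d ≠ 0 := by
  intro h
  exact nondeg μ hd 0 (by rw [h]; rfl)

lemma exp_strict_amgm {s t : ℝ} (h : s ≠ t) :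
    2 * Real.exp ((s + t) / 2) < Real.exp s + Real.exp t := by
  have h1 : Real.exp s = Real.exp (s/2) * Real.exp (s/2) := by rw [← Real.exp_add]; ring_nf
  have h2 : Real.exp t = Real.exp (t/2) * Real.exp (t/2) := by rw [← Real.exp_add]; ring_nf
  have h3 : Real.exp ((s+t)/2) = Real.exp (s/2) * Real.exp (t/2) := by
    rw [← Real.exp_add]; ring_nf
  have hne : Real.exp (s/2) ≠ Real.exp (t/2) := by
    intro hEq
    exact h (by linarith [Real.exp_eq_exp.1 hEq])
  nlinarith [sq_pos_of_ne_zero (sub_ne_zero.2 hne), sq_nonneg (Real.exp (s/2) - Real.exp (t/2))]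

lemma exp_amgm (s t : ℝ) :
    2 * Real.exp ((s + t) / 2) ≤ Real.exp s + Real.exp t := by
  rcases eq_or_ne s t with rfl | h
  · have : (s + s) / 2 = s := by ring
    rw [this]; linarith
  · exact (exp_strict_amgm h).le

lemma Zfun_sq_midpoint_lt (hd : 2 ≤ d) {a b : ℝ} (hab : a ≠ b) :
    Zfun d μ ((a + b) / 2) ^ 2 < Zfun d μ a * Zfun d μ b := by
  set ν := sphMeas d with hν
  haveI : NeZero ν := ⟨sphMeas_ne_zero μ hd⟩
  set m := (a + b) / 2 with hm_def
  set F : ℝ → sphere (0 : EuclideanSpace ℝ (Fin d)) 1 → ℝ :=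
    fun κ z => Real.exp (κ * innF μ z) with hF
  have hint : ∀ κ, Integrable (F κ) ν := integrable_exp_innF μ
  set G : (sphere (0 : EuclideanSpace ℝ (Fin d)) 1) × (sphere (0 : EuclideanSpace ℝ (Fin d)) 1) → ℝ :=
    fun p => F a p.1 * F b p.2 + F b p.1 * F a p.2 - 2 * (F m p.1 * F m p.2) with hG
  have hG_int : Integrable G (ν.prod ν) :=
    (((hint a).mul_prod (hint b)).add ((hint b).mul_prod (hint a))).sub
      (((hint m).mul_prod (hint m)).const_mul 2)
  have hG_nonneg : 0 ≤ G := by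
    intro p
    have key := exp_amgm (a * innF μ p.1 + b * innF μ p.2) (b * innF μ p.1 + a * innF μ p.2)
    have hmid : (a * innF μ p.1 + b * innF μ p.2 + (b * innF μ p.1 + a * innF μ p.2)) / 2
        = m * innF μ p.1 + m * innF μ p.2 := by rw [hm_def]; ring
    rw [hmid] at key
    simp only [hG, hF, Pi.zero_apply]
    rw [← Real.exp_add, ← Real.exp_add, ← Real.exp_add]
    linarith
  set T : Set ((sphere (0 : EuclideanSpace ℝ (Fin d)) 1) × (sphere (0 : EuclideanSpace ℝ (Fin d)) 1)) :=
    {p | innF μ p.1 ≠ innF μ p.2} with hT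
  have hT_open : IsOpen T :=
    isOpen_ne_fun ((continuous_innF μ).comp continuous_fst) ((continuous_innF μ).comp continuous_snd)
  have hT_sub : T ⊆ Function.support G := by
    intro p hp
    have hne : a * innF μ p.1 + b * innF μ p.2 ≠ b * innF μ p.1 + a * innF μ p.2 := by
      intro hEq
      apply hab
      have hf : innF μ p.1 ≠ innF μ p.2 := hp
      have : (a - b) * (innF μ p.1 - innF μ p.2) = 0 := by linarith
      rcases mul_eq_zero.1 this with h' | h'
      · linarith
      · exact absurd (by linarith : innF μ p.1 = innF μ p.2) hf
    have key := exp_strict_amgm hne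
    have hmid : (a * innF μ p.1 + b * innF μ p.2 + (b * innF μ p.1 + a * innF μ p.2)) / 2
        = m * innF μ p.1 + m * innF μ p.2 := by rw [hm_def]; ring
    rw [hmid] at key
    have : 0 < G p := by
      simp only [hG, hF]
      rw [← Real.exp_add, ← Real.exp_add, ← Real.exp_add]
      linarith
    exact this.ne'
  have hT_ne : ν.prod ν T ≠ 0 := by
    intro h0
    rw [Measure.measure_prod_null hT_open.measurableSet] at h0
    obtain ⟨x, hx⟩ := h0.exists
    simp only [Pi.zero_apply] at hx
    apply nondeg μ hd (innF μ x)
    have hset : {z | innF μ z ≠ innF μ x} = Prod.mk x ⁻¹' T := by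
      ext y
      simp only [hT, Set.mem_setOf_eq, Set.mem_preimage]
      exact ne_comm
    rw [hset]
    exact hx
  have hpos : 0 < ∫ p, G p ∂(ν.prod ν) := by
    rw [integral_pos_iff_support_of_nonneg hG_nonneg hG_int]
    exact lt_of_lt_of_le (pos_iff_ne_zero.2 hT_ne) (measure_mono hT_sub)
  have hcalc : ∫ p, G p ∂(ν.prod ν)
      = Zfun d μ a * Zfun d μ b + Zfun d μ b * Zfun d μ a - 2 * (Zfun d μ m * Zfun d μ m) := by
    have hZ : ∀ κ, Zfun d μ κ = ∫ z, F κ z ∂ν := fun κ => rfl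
    calc ∫ p, G p ∂(ν.prod ν)
        = (∫ p, (F a p.1 * F b p.2 + F b p.1 * F a p.2) ∂(ν.prod ν))
            - ∫ p, 2 * (F m p.1 * F m p.2) ∂(ν.prod ν) :=
          integral_sub (((hint a).mul_prod (hint b)).add ((hint b).mul_prod (hint a)))
            (((hint m).mul_prod (hint m)).const_mul 2)
      _ = ((∫ p, F a p.1 * F b p.2 ∂(ν.prod ν)) + ∫ p, F b p.1 * F a p.2 ∂(ν.prod ν))
            - 2 * ∫ p, F m p.1 * F m p.2 ∂(ν.prod ν) := by
          rw [integral_add ((hint a).mul_prod (hint b)) ((hint b).mul_prod (hint a)),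
            integral_const_mul]
      _ = Zfun d μ a * Zfun d μ b + Zfun d μ b * Zfun d μ a
            - 2 * (Zfun d μ m * Zfun d μ m) := by
          rw [integral_prod_mul (μ := ν) (ν := ν) (F a) (F b),
            integral_prod_mul (μ := ν) (ν := ν) (F b) (F a),
            integral_prod_mul (μ := ν) (ν := ν) (F m) (F m), hZ a, hZ b, hZ m]
  rw [hcalc] at hpos
  nlinarith [hpos]

lemma Zfun_pos (hd : 2 ≤ d) (κ : ℝ) : 0 < Zfun d μ κ := by
  haveI : NeZero (sphMeas d) := ⟨sphMeas_ne_zero μ hd⟩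
  exact integral_exp_pos (integrable_exp_innF μ κ)

lemma log_Zfun_convex (hd : 2 ≤ d) :
    ConvexOn ℝ Set.univ (fun κ : ℝ => Real.log (Zfun d μ κ)) := by
  refine convexOn_iff_forall_pos.2 ⟨convex_univ, fun x _ y _ a b ha hb hab => ?_⟩
  have hZpos : ∀ κ, 0 < Zfun d μ κ := Zfun_pos μ hd
  have e : Real.HolderConjugate (1/a) (1/b) := Real.holderConjugate_one_div ha hb hab
  have key : Zfun d μ (a * x + b * y) ≤ Zfun d μ x ^ a * Zfun d μ y ^ b := by
    have hH := integral_mul_le_Lp_mul_Lq_of_nonneg e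
      (Filter.Eventually.of_forall fun z => (Real.exp_pos ((a*x) * innF μ z)).le)
      (Filter.Eventually.of_forall fun z => (Real.exp_pos ((b*y) * innF μ z)).le)
      (memℒp_exp_innF μ (a*x) _) (memℒp_exp_innF μ (b*y) _)
    rw [one_div_one_div, one_div_one_div] at hH
    have h2 : ∀ z, Real.exp ((a*x) * innF μ z) ^ (1/a : ℝ) = Real.exp (x * innF μ z) := by
      intro z; rw [← Real.exp_mul]; congr 1; field_simp
    have h3 : ∀ z, Real.exp ((b*y) * innF μ z) ^ (1/b : ℝ) = Real.exp (y * innF μ z) := by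
      intro z; rw [← Real.exp_mul]; congr 1; field_simp
    calc Zfun d μ (a*x + b*y)
        = ∫ z, Real.exp ((a*x) * innF μ z) * Real.exp ((b*y) * innF μ z) ∂(sphMeas d) := by
          unfold Zfun
          apply integral_congr_ae
          apply Filter.Eventually.of_forall
          intro z
          show Real.exp ((a*x + b*y) * innF μ z)
            = Real.exp ((a*x) * innF μ z) * Real.exp ((b*y) * innF μ z)
          rw [← Real.exp_add]
          congr 1
          ring
      _ ≤ (∫ z, Real.exp ((a*x) * innF μ z) ^ (1/a : ℝ) ∂(sphMeas d)) ^ a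
            * (∫ z, Real.exp ((b*y) * innF μ z) ^ (1/b : ℝ) ∂(sphMeas d)) ^ b := hH
      _ = Zfun d μ x ^ a * Zfun d μ y ^ b := by
          simp_rw [h2, h3]; rfl
  simp only [smul_eq_mul]
  calc Real.log (Zfun d μ (a*x + b*y)) ≤ Real.log (Zfun d μ x ^ a * Zfun d μ y ^ b) :=
        Real.log_le_log (hZpos _) key
    _ = a * Real.log (Zfun d μ x) + b * Real.log (Zfun d μ y) := by
        rw [Real.log_mul (Real.rpow_pos_of_pos (hZpos x) a).ne'
          (Real.rpow_pos_of_pos (hZpos y) b).ne',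
          Real.log_rpow (hZpos x), Real.log_rpow (hZpos y)]

lemma strictConvexOn_of_convexOn_of_midpoint {f : ℝ → ℝ} (hc : ConvexOn ℝ Set.univ f)
    (hm : ∀ x y : ℝ, x ≠ y → f ((x + y) / 2) < (f x + f y) / 2) :
    StrictConvexOn ℝ Set.univ f := by
  refine ⟨convex_univ, fun x _ y _ hxy a b ha hb hab => ?_⟩
  simp only [smul_eq_mul]
  have hba : b = 1 - a := by linarith
  rcases le_or_gt a (1/2) with hha | hha
  · have hwle : f ((2*a) * x + (1 - 2*a) * y) ≤ (2*a) * f x + (1 - 2*a) * f y := by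
      have := hc.2 (Set.mem_univ x) (Set.mem_univ y)
        (by linarith : (0:ℝ) ≤ 2*a) (by linarith : (0:ℝ) ≤ 1 - 2*a) (by ring)
      simpa [smul_eq_mul] using this
    have hwy : (2*a) * x + (1 - 2*a) * y ≠ y := by
      intro hEq
      apply hxy
      have h2a : (2*a) ≠ 0 := ne_of_gt (by linarith)
      have hxy2 : 2*a*x = 2*a*y := by linear_combination hEq
      exact mul_left_cancel₀ h2a hxy2
    have key := hm _ _ hwy
    have hmid : ((2*a) * x + (1 - 2*a) * y + y) / 2 = a * x + b * y := by
      rw [hba]; ring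
    rw [hmid] at key
    calc f (a*x + b*y) < (f ((2*a) * x + (1 - 2*a) * y) + f y) / 2 := key
      _ ≤ ((2*a) * f x + (1 - 2*a) * f y + f y) / 2 := by linarith
      _ = a * f x + b * f y := by rw [hba]; ring
  · have hwle : f ((1 - 2*b) * x + (2*b) * y) ≤ (1 - 2*b) * f x + (2*b) * f y := by
      have := hc.2 (Set.mem_univ x) (Set.mem_univ y)
        (by linarith : (0:ℝ) ≤ 1 - 2*b) (by linarith : (0:ℝ) ≤ 2*b) (by ring)
      simpa [smul_eq_mul] using this
    have hwx : x ≠ (1 - 2*b) * x + (2*b) * y := by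
      intro hEq
      apply hxy
      have h2b : (2*b) ≠ 0 := ne_of_gt (by linarith)
      have hxy2 : 2*b*x = 2*b*y := by linear_combination hEq
      exact mul_left_cancel₀ h2b hxy2
    have key := hm _ _ hwx
    have hmid : (x + ((1 - 2*b) * x + (2*b) * y)) / 2 = a * x + b * y := by
      rw [hba]; ring
    rw [hmid] at key
    calc f (a*x + b*y) < (f x + f ((1 - 2*b) * x + (2*b) * y)) / 2 := key
      _ ≤ (f x + ((1 - 2*b) * f x + (2*b) * f y)) / 2 := by linarith
      _ = a * f x + b * f y := by rw [hba]; ring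

end Aux

/-- The log-normalizer `κ ↦ log Z_μ(κ)` is strictly convex on `ℝ`. -/
theorem vMF_log_normalizer_strictConvex (d : ℕ) (hd : 2 ≤ d)
    (μ : sphere (0 : EuclideanSpace ℝ (Fin d)) 1) :
    StrictConvexOn ℝ Set.univ (fun κ : ℝ => Real.log (Zfun d μ κ)) := by
  have hZpos : ∀ κ, 0 < Zfun d μ κ := Zfun_pos μ hd
  refine strictConvexOn_of_convexOn_of_midpoint (log_Zfun_convex μ hd) ?_
  intro x y hxy
  have h := Zfun_sq_midpoint_lt μ hd hxy
  have l1 : Real.log (Zfun d μ ((x+y)/2) ^ 2) < Real.log (Zfun d μ x * Zfun d μ y) :=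
    Real.log_lt_log (pow_pos (hZpos _) 2) h
  rw [Real.log_pow, Real.log_mul (hZpos x).ne' (hZpos y).ne'] at l1
  push_cast at l1
  linarith
end

section
/- (Proposition 1) For any unit vector μ on the unit sphere S of E, the differential entropy ζ(κ) = H_μ(κ) of the von Mises–Fisher distribution vMF(μ, κ) is a monotonically (strictly) decreasing function of the concentration parameter κ on the interval (0, +∞): for all 0 < κ₁ < κ₂ one has H_μ(κ₂) < H_μ(κ₁). -/
open MeasureTheory Metric
open scoped RealInnerProductSpace Pointwise ENNReal

/-- The vMF density `q_{μ,κ}(z) = Z_μ(κ)⁻¹ · exp (κ ⟪μ, z⟫)` with respect to `σ`. -/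
noncomputable def qfun (d : ℕ) (μ : sphere (0 : EuclideanSpace ℝ (Fin d)) 1) (κ : ℝ)
    (z : sphere (0 : EuclideanSpace ℝ (Fin d)) 1) : ℝ :=
  (Zfun d μ κ)⁻¹ *
    Real.exp (κ * ⟪(μ : EuclideanSpace ℝ (Fin d)), (z : EuclideanSpace ℝ (Fin d))⟫)

/-- The differential entropy `H_μ(κ) = −∫_{z ∈ S} q_{μ,κ}(z) · log q_{μ,κ}(z) dσ(z)`. -/
noncomputable def Hent (d : ℕ) (μ : sphere (0 : EuclideanSpace ℝ (Fin d)) 1) (κ : ℝ) : ℝ :=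
  -∫ z, qfun d μ κ z * Real.log (qfun d μ κ z) ∂(sphMeas d)

namespace VMFAux

variable {d : ℕ}

instance : IsFiniteMeasure (sphMeas d) := by unfold sphMeas; infer_instance

lemma integrable_cont {f : sphere (0 : EuclideanSpace ℝ (Fin d)) 1 → ℝ} (hf : Continuous f) :
    Integrable f (sphMeas d) :=
  hf.integrable_of_hasCompactSupport (HasCompactSupport.of_compactSpace f)

lemma cont_t (μ : sphere (0 : EuclideanSpace ℝ (Fin d)) 1) :
    Continuous fun z : sphere (0 : EuclideanSpace ℝ (Fin d)) 1 =>
      ⟪(μ : EuclideanSpace ℝ (Fin d)), (z : EuclideanSpace ℝ (Fin d))⟫ :=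
  continuous_const.inner continuous_subtype_val

lemma sphMeas_univ_pos (hd : 1 ≤ d) : 0 < sphMeas d Set.univ := by
  haveI : Nonempty (Fin d) := ⟨⟨0, hd⟩⟩
  haveI : Nontrivial (EuclideanSpace ℝ (Fin d)) := inferInstance
  rw [sphMeas, Measure.toSphere_apply_univ']
  refine ENNReal.mul_pos ?_ ?_
  · simp [finrank_euclideanSpace_fin]; omega
  · rw [measure_diff_null (measure_singleton _)]
    exact (isOpen_ball.measure_pos volume (nonempty_ball.2 one_pos)).ne'

variable {d : ℕ}

lemma cap_pos (hd : 1 ≤ d) (ν : sphere (0 : EuclideanSpace ℝ (Fin d)) 1) :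
    0 < sphMeas d {z : sphere (0 : EuclideanSpace ℝ (Fin d)) 1 |
      1/2 < ⟪(ν : EuclideanSpace ℝ (Fin d)), (z : EuclideanSpace ℝ (Fin d))⟫} := by
  set E := EuclideanSpace ℝ (Fin d)
  set s : Set (sphere (0 : E) 1) := {z | 1/2 < ⟪(ν : E), (z : E)⟫} with hs
  have hνn : ‖(ν : E)‖ = 1 := by
    simpa [mem_sphere_zero_iff_norm] using ν.2
  have hopen : IsOpen s := isOpen_lt continuous_const (cont_t ν)
  have hms : MeasurableSet s := hopen.measurableSet
  rw [sphMeas, Measure.toSphere_apply' _ hms]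
  refine ENNReal.mul_pos ?_ ?_
  · rw [finrank_euclideanSpace_fin]; exact Nat.cast_ne_zero.2 (by omega)
  · -- the cone over the cap contains a ball
    have hball : ball ((2:ℝ)⁻¹ • (ν : E)) 8⁻¹ ⊆ Set.Ioo (0:ℝ) 1 • (Subtype.val '' s) := by
      intro y hy
      rw [mem_ball, dist_eq_norm] at hy
      have hylow : (3:ℝ)/8 < ‖y‖ := by
        have h1 : ‖(2:ℝ)⁻¹ • (ν : E)‖ = 1/2 := by
          rw [norm_smul, hνn]; norm_num
        have := norm_sub_norm_le ((2:ℝ)⁻¹ • (ν : E)) y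
        rw [h1] at this
        have h2 : ‖(2:ℝ)⁻¹ • (ν : E) - y‖ = ‖y - (2:ℝ)⁻¹ • (ν : E)‖ := norm_sub_rev _ _
        rw [h2] at this
        linarith
      have hyhigh : ‖y‖ < (5:ℝ)/8 := by
        have h1 : ‖(2:ℝ)⁻¹ • (ν : E)‖ = 1/2 := by
          rw [norm_smul, hνn]; norm_num
        have := norm_sub_norm_le y ((2:ℝ)⁻¹ • (ν : E))
        rw [h1] at this
        linarith
      have hy0 : (0:ℝ) < ‖y‖ := by linarith
      have hinner : (3:ℝ)/8 < ⟪(ν : E), y⟫ := by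
        have h1 : -(1/8 : ℝ) < ⟪(ν : E), y - (2:ℝ)⁻¹ • (ν : E)⟫ := by
          have hcs := abs_real_inner_le_norm (ν : E) (y - (2:ℝ)⁻¹ • (ν : E))
          rw [hνn, one_mul] at hcs
          have h2 := abs_lt.1 (hcs.trans_lt hy)
          linarith [h2.1]
        have h2 : ⟪(ν : E), y⟫ = ⟪(ν : E), y - (2:ℝ)⁻¹ • (ν : E)⟫ + 1/2 := by
          rw [inner_sub_right, real_inner_smul_right, real_inner_self_eq_norm_sq, hνn]
          ring
        linarith
      refine ⟨‖y‖, ⟨hy0, by linarith⟩, ‖y‖⁻¹ • y, ?_, ?_⟩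
      · refine ⟨⟨‖y‖⁻¹ • y, ?_⟩, ?_, rfl⟩
        · rw [mem_sphere_zero_iff_norm, norm_smul, norm_inv, Real.norm_eq_abs,
            abs_of_pos hy0, inv_mul_cancel₀ hy0.ne']
        · show (1:ℝ)/2 < ⟪(ν : E), ‖y‖⁻¹ • y⟫
          rw [real_inner_smul_right, inv_mul_eq_div, lt_div_iff₀ hy0]
          linarith
      · show ‖y‖ • (‖y‖⁻¹ • y) = y
        rw [smul_smul, mul_inv_cancel₀ hy0.ne', one_smul]
    have := measure_mono hball (μ := (volume : Measure E))
    have hb : 0 < volume (ball ((2:ℝ)⁻¹ • (ν : E)) 8⁻¹) :=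
      isOpen_ball.measure_pos volume (nonempty_ball.2 (by norm_num))
    exact (hb.trans_le this).ne'

variable {d : ℕ} (μ : sphere (0 : EuclideanSpace ℝ (Fin d)) 1)

lemma integrable_exp (κ : ℝ) :
    Integrable (fun z : sphere (0 : EuclideanSpace ℝ (Fin d)) 1 =>
      Real.exp (κ * ⟪(μ : EuclideanSpace ℝ (Fin d)), (z : EuclideanSpace ℝ (Fin d))⟫))
      (sphMeas d) :=
  integrable_cont (Real.continuous_exp.comp ((continuous_const.mul (cont_t μ))))

lemma integrable_mul_exp (κ : ℝ) :
    Integrable (fun z : sphere (0 : EuclideanSpace ℝ (Fin d)) 1 =>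
      ⟪(μ : EuclideanSpace ℝ (Fin d)), (z : EuclideanSpace ℝ (Fin d))⟫ *
        Real.exp (κ * ⟪(μ : EuclideanSpace ℝ (Fin d)), (z : EuclideanSpace ℝ (Fin d))⟫))
      (sphMeas d) :=
  integrable_cont ((cont_t μ).mul (Real.continuous_exp.comp ((continuous_const.mul (cont_t μ)))))

lemma Zfun_pos (hd : 1 ≤ d) (κ : ℝ) : 0 < Zfun d μ κ := by
  haveI : NeZero (sphMeas d) := ⟨by
    intro h
    have := sphMeas_univ_pos hd
    rw [h] at this
    simp at this⟩
  exact integral_exp_pos (integrable_exp μ κ)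

lemma Hent_eq (hd : 1 ≤ d) (κ : ℝ) :
    Hent d μ κ = Real.log (Zfun d μ κ) - κ * Mfun d μ κ / Zfun d μ κ := by
  have hZ := Zfun_pos μ hd κ
  set Z := Zfun d μ κ with hZdef
  have hint : ∀ z, qfun d μ κ z * Real.log (qfun d μ κ z) =
      (Z⁻¹ * κ) * (⟪(μ : EuclideanSpace ℝ (Fin d)), (z : EuclideanSpace ℝ (Fin d))⟫ *
        Real.exp (κ * ⟪(μ : EuclideanSpace ℝ (Fin d)), (z : EuclideanSpace ℝ (Fin d))⟫)) -
      (Z⁻¹ * Real.log Z) *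
        Real.exp (κ * ⟪(μ : EuclideanSpace ℝ (Fin d)), (z : EuclideanSpace ℝ (Fin d))⟫) := by
    intro z
    rw [qfun, Real.log_mul (inv_ne_zero hZ.ne') (Real.exp_ne_zero _), Real.log_inv,
      Real.log_exp, ← hZdef]
    ring
  rw [Hent]
  rw [integral_congr_ae (Filter.Eventually.of_forall hint)]
  rw [integral_sub ((integrable_mul_exp μ κ).const_mul _) ((integrable_exp μ κ).const_mul _),
    MeasureTheory.integral_const_mul, MeasureTheory.integral_const_mul, ← Zfun, ← Mfun]
  field_simp
  ring

variable {d : ℕ} (μ : sphere (0 : EuclideanSpace ℝ (Fin d)) 1)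

/-- Gibbs inequality. -/
lemma gibbs (hd : 1 ≤ d) {κ₁ κ₂ : ℝ} :
    (κ₁ - κ₂) * Mfun d μ κ₂ +
      (Real.log (Zfun d μ κ₂) - Real.log (Zfun d μ κ₁)) * Zfun d μ κ₂ ≤ 0 := by
  have hZ₁ := Zfun_pos μ hd κ₁
  have hZ₂ := Zfun_pos μ hd κ₂
  set Z₁ := Zfun d μ κ₁
  set Z₂ := Zfun d μ κ₂
  set t : sphere (0 : EuclideanSpace ℝ (Fin d)) 1 → ℝ :=
    fun z => ⟪(μ : EuclideanSpace ℝ (Fin d)), (z : EuclideanSpace ℝ (Fin d))⟫ with ht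
  have key : ∀ z, Real.exp (κ₂ * t z) * ((κ₁ - κ₂) * t z + (Real.log Z₂ - Real.log Z₁))
      ≤ (Z₂ / Z₁) * Real.exp (κ₁ * t z) - Real.exp (κ₂ * t z) := by
    intro z
    have hxpos : 0 < Z₂ * Real.exp (κ₁ * t z) / (Z₁ * Real.exp (κ₂ * t z)) := by positivity
    have hlog := Real.log_le_sub_one_of_pos hxpos
    have hlogeq : Real.log (Z₂ * Real.exp (κ₁ * t z) / (Z₁ * Real.exp (κ₂ * t z)))
        = (Real.log Z₂ + κ₁ * t z) - (Real.log Z₁ + κ₂ * t z) := by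
      rw [Real.log_div (mul_pos hZ₂ (Real.exp_pos _)).ne' (mul_pos hZ₁ (Real.exp_pos _)).ne',
        Real.log_mul hZ₂.ne' (Real.exp_ne_zero _), Real.log_mul hZ₁.ne' (Real.exp_ne_zero _),
        Real.log_exp, Real.log_exp]
    rw [hlogeq] at hlog
    have hexp : 0 < Real.exp (κ₂ * t z) := Real.exp_pos _
    have hmul := mul_le_mul_of_nonneg_left (sub_le_sub_right hlog 0) hexp.le
    -- rearrange by field_simp / nlinarith
    have hratio : Real.exp (κ₂ * t z) * (Z₂ * Real.exp (κ₁ * t z) / (Z₁ * Real.exp (κ₂ * t z)))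
        = Z₂ / Z₁ * Real.exp (κ₁ * t z) := by
      field_simp
    nlinarith [hexp, hlog]
  have hle := integral_mono
    (μ := sphMeas d)
    (f := fun z => Real.exp (κ₂ * t z) * ((κ₁ - κ₂) * t z + (Real.log Z₂ - Real.log Z₁)))
    (g := fun z => (Z₂ / Z₁) * Real.exp (κ₁ * t z) - Real.exp (κ₂ * t z))
    (integrable_cont ((Real.continuous_exp.comp (continuous_const.mul (cont_t μ))).mul
      ((continuous_const.mul (cont_t μ)).add continuous_const)))
    (((integrable_exp μ κ₁).const_mul _).sub (integrable_exp μ κ₂)) key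
  have hlhs : ∫ z, Real.exp (κ₂ * t z) * ((κ₁ - κ₂) * t z + (Real.log Z₂ - Real.log Z₁))
      ∂(sphMeas d) = (κ₁ - κ₂) * Mfun d μ κ₂ + (Real.log Z₂ - Real.log Z₁) * Z₂ := by
    have : ∀ z, Real.exp (κ₂ * t z) * ((κ₁ - κ₂) * t z + (Real.log Z₂ - Real.log Z₁))
        = (κ₁ - κ₂) * (t z * Real.exp (κ₂ * t z))
          + (Real.log Z₂ - Real.log Z₁) * Real.exp (κ₂ * t z) := fun z => by ring
    rw [integral_congr_ae (Filter.Eventually.of_forall this),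
      integral_add ((integrable_mul_exp μ κ₂).const_mul _) ((integrable_exp μ κ₂).const_mul _),
      MeasureTheory.integral_const_mul, MeasureTheory.integral_const_mul]
    rfl
  have hrhs : ∫ z, ((Z₂ / Z₁) * Real.exp (κ₁ * t z) - Real.exp (κ₂ * t z)) ∂(sphMeas d) = 0 := by
    rw [integral_sub ((integrable_exp μ κ₁).const_mul _) (integrable_exp μ κ₂),
      MeasureTheory.integral_const_mul]
    show Z₂ / Z₁ * Z₁ - Z₂ = 0
    field_simp
    ring
  rw [hlhs, hrhs] at hle
  exact hle

variable {d : ℕ} (μ : sphere (0 : EuclideanSpace ℝ (Fin d)) 1)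

lemma moment_strict (hd : 1 ≤ d) {κ₁ κ₂ : ℝ} (hκ : κ₁ < κ₂) :
    Mfun d μ κ₁ * Zfun d μ κ₂ < Mfun d μ κ₂ * Zfun d μ κ₁ := by
  set E := EuclideanSpace ℝ (Fin d)
  set σ := sphMeas d with hσ
  set t : sphere (0 : E) 1 → ℝ := fun z => ⟪(μ : E), (z : E)⟫ with ht
  have hct : Continuous t := cont_t μ
  set P := σ.prod σ with hP
  have ic : ∀ {h : sphere (0 : E) 1 × sphere (0 : E) 1 → ℝ}, Continuous h → Integrable h P :=
    fun hc => hc.integrable_of_hasCompactSupport (HasCompactSupport.of_compactSpace _)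
  have c1 : Continuous fun p : sphere (0 : E) 1 × sphere (0 : E) 1 => t p.1 :=
    hct.comp continuous_fst
  have c2 : Continuous fun p : sphere (0 : E) 1 × sphere (0 : E) 1 => t p.2 :=
    hct.comp continuous_snd
  have ce : ∀ (κ : ℝ), Continuous fun p : sphere (0 : E) 1 × sphere (0 : E) 1 =>
      Real.exp (κ * t p.1) := fun κ => Real.continuous_exp.comp (continuous_const.mul c1)
  have ce' : ∀ (κ : ℝ), Continuous fun p : sphere (0 : E) 1 × sphere (0 : E) 1 =>
      Real.exp (κ * t p.2) := fun κ => Real.continuous_exp.comp (continuous_const.mul c2)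
  set F : sphere (0 : E) 1 × sphere (0 : E) 1 → ℝ := fun p =>
    (t p.1 - t p.2) *
      (Real.exp (κ₂ * t p.1 + κ₁ * t p.2) - Real.exp (κ₁ * t p.1 + κ₂ * t p.2)) with hF
  have hcF : Continuous F := by
    refine (c1.sub c2).mul (Continuous.sub ?_ ?_) <;>
      exact Real.continuous_exp.comp ((continuous_const.mul c1).add (continuous_const.mul c2))
  have hintF : Integrable F P := ic hcF
  have hFnn : ∀ p, 0 ≤ F p := by
    intro p
    rcases le_total (t p.2) (t p.1) with h | h
    · refine mul_nonneg (by linarith) ?_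
      have h2 : κ₁ * t p.1 + κ₂ * t p.2 ≤ κ₂ * t p.1 + κ₁ * t p.2 := by nlinarith
      simpa using sub_nonneg.2 (Real.exp_le_exp.2 h2)
    · have h2 : κ₂ * t p.1 + κ₁ * t p.2 ≤ κ₁ * t p.1 + κ₂ * t p.2 := by nlinarith
      have h3 := Real.exp_le_exp.2 h2
      simp only [hF]
      nlinarith
  -- positivity of the integral
  have hμneg : -(μ : E) ∈ sphere (0 : E) 1 := by
    rw [mem_sphere_zero_iff_norm, norm_neg]
    simpa [mem_sphere_zero_iff_norm] using μ.2
  set V : Set (sphere (0 : E) 1) := {z | 1/2 < t z} with hV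
  set W : Set (sphere (0 : E) 1) := {z | t z < -(1/2)} with hW
  have hVpos : 0 < σ V := cap_pos hd μ
  have hWpos : 0 < σ W := by
    have := cap_pos hd (⟨-(μ : E), hμneg⟩ : sphere (0 : E) 1)
    convert this using 2
    ext z
    simp only [hW, Set.mem_setOf_eq, ht, inner_neg_left]
    constructor <;> intro h <;> linarith
  have hsub : V ×ˢ W ⊆ Function.support F := by
    rintro ⟨z, w⟩ ⟨hz, hw⟩
    have hz' : 1/2 < t z := hz
    have hw' : t w < -(1/2) := hw
    have h1 : 0 < t z - t w := by linarith
    have h2 : κ₁ * t z + κ₂ * t w < κ₂ * t z + κ₁ * t w := by nlinarith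
    have h3 : 0 < Real.exp (κ₂ * t z + κ₁ * t w) - Real.exp (κ₁ * t z + κ₂ * t w) :=
      sub_pos.2 (Real.exp_lt_exp.2 h2)
    exact (mul_pos h1 h3).ne'
  have hFpos : 0 < ∫ p, F p ∂P := by
    rw [integral_pos_iff_support_of_nonneg hFnn hintF]
    calc (0 : ℝ≥0∞) < σ V * σ W := ENNReal.mul_pos hVpos.ne' hWpos.ne'
      _ = P (V ×ˢ W) := (Measure.prod_prod _ _).symm
      _ ≤ P (Function.support F) := measure_mono hsub
  -- value of the integral
  have hexpand : ∀ p : sphere (0 : E) 1 × sphere (0 : E) 1, F p =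
      (t p.1 * Real.exp (κ₂ * t p.1)) * Real.exp (κ₁ * t p.2)
        - (t p.1 * Real.exp (κ₁ * t p.1)) * Real.exp (κ₂ * t p.2)
        - Real.exp (κ₂ * t p.1) * (t p.2 * Real.exp (κ₁ * t p.2))
        + Real.exp (κ₁ * t p.1) * (t p.2 * Real.exp (κ₂ * t p.2)) := by
    intro p; rw [hF]; simp only [Real.exp_add]; ring
  have i1 : Integrable (fun p : sphere (0 : E) 1 × sphere (0 : E) 1 =>
      (t p.1 * Real.exp (κ₂ * t p.1)) * Real.exp (κ₁ * t p.2)) P :=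
    ic ((c1.mul (ce κ₂)).mul (ce' κ₁))
  have i2 : Integrable (fun p : sphere (0 : E) 1 × sphere (0 : E) 1 =>
      (t p.1 * Real.exp (κ₁ * t p.1)) * Real.exp (κ₂ * t p.2)) P :=
    ic ((c1.mul (ce κ₁)).mul (ce' κ₂))
  have i3 : Integrable (fun p : sphere (0 : E) 1 × sphere (0 : E) 1 =>
      Real.exp (κ₂ * t p.1) * (t p.2 * Real.exp (κ₁ * t p.2))) P :=
    ic ((ce κ₂).mul (c2.mul (ce' κ₁)))
  have i4 : Integrable (fun p : sphere (0 : E) 1 × sphere (0 : E) 1 =>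
      Real.exp (κ₁ * t p.1) * (t p.2 * Real.exp (κ₂ * t p.2))) P :=
    ic ((ce κ₁).mul (c2.mul (ce' κ₂)))
  have hval : ∫ p, F p ∂P =
      Mfun d μ κ₂ * Zfun d μ κ₁ - Mfun d μ κ₁ * Zfun d μ κ₂
        - Zfun d μ κ₂ * Mfun d μ κ₁ + Zfun d μ κ₁ * Mfun d μ κ₂ := by
    rw [integral_congr_ae (Filter.Eventually.of_forall hexpand),
      integral_add (μ := P)
        (f := fun p => t p.1 * Real.exp (κ₂ * t p.1) * Real.exp (κ₁ * t p.2)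
          - t p.1 * Real.exp (κ₁ * t p.1) * Real.exp (κ₂ * t p.2)
          - Real.exp (κ₂ * t p.1) * (t p.2 * Real.exp (κ₁ * t p.2)))
        (g := fun p => Real.exp (κ₁ * t p.1) * (t p.2 * Real.exp (κ₂ * t p.2)))
        ((i1.sub i2).sub i3) i4,
      integral_sub (μ := P)
        (f := fun p => t p.1 * Real.exp (κ₂ * t p.1) * Real.exp (κ₁ * t p.2)
          - t p.1 * Real.exp (κ₁ * t p.1) * Real.exp (κ₂ * t p.2))
        (g := fun p => Real.exp (κ₂ * t p.1) * (t p.2 * Real.exp (κ₁ * t p.2)))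
        (i1.sub i2) i3,
      integral_sub (μ := P)
        (f := fun p => t p.1 * Real.exp (κ₂ * t p.1) * Real.exp (κ₁ * t p.2))
        (g := fun p => t p.1 * Real.exp (κ₁ * t p.1) * Real.exp (κ₂ * t p.2))
        i1 i2,
      MeasureTheory.integral_prod_mul (f := fun z => t z * Real.exp (κ₂ * t z))
        (g := fun z => Real.exp (κ₁ * t z)),
      MeasureTheory.integral_prod_mul (f := fun z => t z * Real.exp (κ₁ * t z))
        (g := fun z => Real.exp (κ₂ * t z)),
      MeasureTheory.integral_prod_mul (f := fun z => Real.exp (κ₂ * t z))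
        (g := fun z => t z * Real.exp (κ₁ * t z)),
      MeasureTheory.integral_prod_mul (f := fun z => Real.exp (κ₁ * t z))
        (g := fun z => t z * Real.exp (κ₂ * t z))]
    rfl
  rw [hval] at hFpos
  linarith

end VMFAux

/-- (Proposition 1) The differential entropy of the vMF distribution is strictly
decreasing in the concentration parameter `κ` on `(0, +∞)`. -/
theorem vMF_entropy_strictAnti_on_pos (d : ℕ) (hd : 2 ≤ d)
    (μ : sphere (0 : EuclideanSpace ℝ (Fin d)) 1) :
    ∀ κ₁ κ₂ : ℝ, 0 < κ₁ → κ₁ < κ₂ → Hent d μ κ₂ < Hent d μ κ₁ := by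
  intro κ₁ κ₂ hκ₁ hκ
  have hd1 : 1 ≤ d := by omega
  have hZ₁ := VMFAux.Zfun_pos μ hd1 κ₁
  have hZ₂ := VMFAux.Zfun_pos μ hd1 κ₂
  have hA := VMFAux.moment_strict μ hd1 hκ
  have hB := VMFAux.gibbs μ hd1 (κ₁ := κ₁) (κ₂ := κ₂)
  rw [VMFAux.Hent_eq μ hd1 κ₁, VMFAux.Hent_eq μ hd1 κ₂]
  set Z₁ := Zfun d μ κ₁
  set Z₂ := Zfun d μ κ₂
  set M₁ := Mfun d μ κ₁
  set M₂ := Mfun d μ κ₂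
  set m₁ := M₁ / Z₁ with hm₁
  set m₂ := M₂ / Z₂ with hm₂
  have hM₁ : M₁ = m₁ * Z₁ := by rw [hm₁, div_mul_cancel₀ _ hZ₁.ne']
  have hM₂ : M₂ = m₂ * Z₂ := by rw [hm₂, div_mul_cancel₀ _ hZ₂.ne']
  have hm : m₁ < m₂ := by
    rw [hM₁, hM₂] at hA
    by_contra h
    push_neg at h
    nlinarith [mul_pos hZ₁ hZ₂]
  have hB' : (κ₁ - κ₂) * m₂ + (Real.log Z₂ - Real.log Z₁) ≤ 0 := by
    rw [hM₂] at hB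
    by_contra h
    push_neg at h
    nlinarith
  have e1 : κ₁ * M₁ / Z₁ = κ₁ * m₁ := by rw [hm₁]; ring
  have e2 : κ₂ * M₂ / Z₂ = κ₂ * m₂ := by rw [hm₂]; ring
  rw [e1, e2]
  nlinarith [mul_pos hκ₁ (sub_pos.2 hm)]
end
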